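/- If PX = YQR for palindromes P, Q, R and words X, Y, then there exist palindromes S, T, U and possibly a word Z such that one of the following holds: (1) X = SYTU; (2) X = ZST and Y = UZ; (3) X = SZT and Y = ZU; (4) X = ZS and Y = TZU; (5) X = SZ and Y = ZTU; (6) Y = SXTU. -/
import Mathlib


def Pal {α : Type*} (w : List α) : Prop := w.reverse = w

noncomputable def palLen {α : Type*} (w : List α) : ℕ :=
  sInf {k | ∃ l : List (List α), l.length = k ∧ (∀ p ∈ l, Pal p) ∧ l.flatten = w}

section Aux

variable {α : Type*}

theorem pal_nil : Pal ([] : List α) := rfl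

/-- Splitting a palindrome at any point: the reverse of the suffix is comparable
with the prefix. -/
theorem pal_split {Y W : List α} (h : Pal (Y ++ W)) :
    (∃ Z, Pal Z ∧ Y = W.reverse ++ Z) ∨ (∃ M, Pal M ∧ W.reverse = Y ++ M) := by
  have h' : W.reverse ++ Y.reverse = Y ++ W := by
    have h2 : (Y ++ W).reverse = Y ++ W := h
    rwa [List.reverse_append] at h2
  rcases List.append_eq_append_iff.mp h' with ⟨e, h1, h2⟩ | ⟨e, h1, h2⟩
  · -- h1 : Y = W.reverse ++ e, h2 : Y.reverse = e ++ W
    have h3 : Y.reverse = e.reverse ++ W := by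
      rw [h1, List.reverse_append, List.reverse_reverse]
    have he : e.reverse = e := List.append_cancel_right (h3.symm.trans h2)
    exact Or.inl ⟨e, he, h1⟩
  · -- h1 : W.reverse = Y ++ e, h2 : W = e ++ Y.reverse
    have h3 : W.reverse = Y ++ e.reverse := by
      rw [h2, List.reverse_append, List.reverse_reverse]
    have he : e.reverse = e := List.append_cancel_left (h3.symm.trans h1)
    exact Or.inr ⟨e, he, h1⟩

theorem pal_split' {W V : List α} (h : Pal (W ++ V)) :
    (∃ K, Pal K ∧ V = K ++ W.reverse) ∨ (∃ N, Pal N ∧ W = V.reverse ++ N) := by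
  have e1 : V.reverse ++ W.reverse = W ++ V := by
    rw [← List.reverse_append]; exact h
  have h' : Pal (V.reverse ++ W.reverse) := by
    show (V.reverse ++ W.reverse).reverse = V.reverse ++ W.reverse
    rw [e1]; exact h
  rcases pal_split h' with ⟨Z, hZ, h1⟩ | ⟨M, hM, h1⟩
  · -- h1 : V.reverse = W.reverse.reverse ++ Z
    rw [List.reverse_reverse] at h1
    refine Or.inl ⟨Z, hZ, ?_⟩
    rw [← List.reverse_reverse V, h1, List.reverse_append, hZ]
  · -- h1 : W.reverse.reverse = V.reverse ++ M
    rw [List.reverse_reverse] at h1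
    exact Or.inr ⟨M, hM, h1⟩

/-- Key overlap lemma: if `A`, `B` are palindromes and `A ++ V = Y ++ B`, then
`V` and `Y` decompose in one of four ways. -/
theorem lemL : ∀ (n : ℕ) (A B V Y : List α), A.length + B.length ≤ n →
    Pal A → Pal B → A ++ V = Y ++ B →
    (∃ S T : List α, Pal S ∧ Pal T ∧ V = S ++ Y ++ T) ∨
    (∃ S T Z : List α, Pal S ∧ Pal T ∧ V = Z ++ S ∧ Y = T ++ Z) ∨
    (∃ S T Z : List α, Pal S ∧ Pal T ∧ V = S ++ Z ∧ Y = Z ++ T) ∨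
    (∃ S T : List α, Pal S ∧ Pal T ∧ Y = S ++ V ++ T) := by
  intro n
  induction n with
  | zero =>
    intro A B V Y hn hA hB h
    have hA0 : A = [] := List.length_eq_zero_iff.mp (by omega)
    have hB0 : B = [] := List.length_eq_zero_iff.mp (by omega)
    rw [hA0, hB0] at h
    simp only [List.nil_append, List.append_nil] at h
    exact Or.inl ⟨[], [], pal_nil, pal_nil, by simp [h]⟩
  | succ n ih =>
    intro A B V Y hn hA hB h
    rcases List.append_eq_append_iff.mp h with ⟨e, h1, h2⟩ | ⟨W, h1, h2⟩
    · -- h1 : Y = A ++ e, h2 : V = e ++ B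
      exact Or.inr (Or.inl ⟨B, A, e, hB, hA, h2, h1⟩)
    · -- h1 : A = Y ++ W, h2 : B = W ++ V
      have hYW : Pal (Y ++ W) := h1 ▸ hA
      have hWV : Pal (W ++ V) := h2 ▸ hB
      rcases pal_split hYW with ⟨Z₁, hZ₁, hα⟩ | ⟨M, hM, hβ⟩
      · rcases pal_split' hWV with ⟨K, hK, hγ⟩ | ⟨N, hN, hδ⟩
        · -- V = K ++ W.reverse, Y = W.reverse ++ Z₁ : case (iii)
          exact Or.inr (Or.inr (Or.inl ⟨K, Z₁, W.reverse, hK, hZ₁, hγ, hα⟩))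
        · -- W = V.reverse ++ N, Y = W.reverse ++ Z₁ : case (iv)
          have hWrev : W.reverse = N ++ V := by
            rw [hδ, List.reverse_append, List.reverse_reverse, hN]
          exact Or.inr (Or.inr (Or.inr ⟨N, Z₁, hN, hZ₁, by rw [hα, hWrev]⟩))
      · rcases pal_split' hWV with ⟨K, hK, hγ⟩ | ⟨N, hN, hδ⟩
        · -- V = K ++ W.reverse, W.reverse = Y ++ M : case (i)
          exact Or.inl ⟨K, M, hK, hM, by rw [hγ, hβ]; try simp⟩
        · -- recursion
          have hWrev : W.reverse = N ++ V := by
            rw [hδ, List.reverse_append, List.reverse_reverse, hN]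
          have hNV : N ++ V = Y ++ M := hWrev.symm.trans hβ
          by_cases hY0 : Y = []
          · by_cases hV0 : V = []
            · exact Or.inl ⟨[], [], pal_nil, pal_nil, by simp [hY0, hV0]⟩
            · -- lengths still decrease
              have l1 := congrArg List.length h1
              have l2 := congrArg List.length h2
              have l3 := congrArg List.length hβ
              have l4 := congrArg List.length hδ
              simp only [List.length_append, List.length_reverse] at l1 l2 l3 l4
              have hVpos : 0 < V.length := List.length_pos_iff.mpr hV0
              exact ih N M V Y (by omega) hN hM hNV
          · have l1 := congrArg List.length h1
            have l2 := congrArg List.length h2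
            have l3 := congrArg List.length hβ
            have l4 := congrArg List.length hδ
            simp only [List.length_append, List.length_reverse] at l1 l2 l3 l4
            have hYpos : 0 < Y.length := List.length_pos_iff.mpr hY0
            exact ih N M V Y (by omega) hN hM hNV

/-- If `A = E ++ B` with `A`, `B` palindromes, then `E` is a product of two
palindromes. -/
theorem corC {A B E : List α} (hA : Pal A) (hB : Pal B) (h : A = E ++ B) :
    ∃ S T, Pal S ∧ Pal T ∧ E = S ++ T := by
  have h' : A ++ [] = E ++ B := by simpa using h
  rcases lemL (A.length + B.length) A B [] E le_rfl hA hB h' with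
    ⟨S, T, hS, hT, hx⟩ | ⟨S, T, Z, hS, hT, hx, hy⟩ |
    ⟨S, T, Z, hS, hT, hx, hy⟩ | ⟨S, T, hS, hT, hy⟩
  · -- [] = S ++ E ++ T
    have : E = [] := by
      have := hx.symm
      simp only [List.append_eq_nil_iff] at this
      exact this.1.2
    exact ⟨[], [], pal_nil, pal_nil, by simp [this]⟩
  · -- [] = Z ++ S, E = T ++ Z
    have hz : Z = [] := by
      have := hx.symm; simp only [List.append_eq_nil_iff] at this; exact this.1
    exact ⟨T, [], hT, pal_nil, by simp [hy, hz]⟩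
  · -- [] = S ++ Z, E = Z ++ T
    have hz : Z = [] := by
      have := hx.symm; simp only [List.append_eq_nil_iff] at this; exact this.2
    exact ⟨[], T, pal_nil, hT, by simp [hy, hz]⟩
  · -- E = S ++ [] ++ T
    exact ⟨S, T, hS, hT, by simpa using hy⟩

/-- If `Q` is a palindrome and `Q ++ E.reverse = E ++ Q`, then `E` is a product
of two palindromes. -/
theorem two_pal_of_comm {Q E : List α} (hQ : Pal Q) (h : Q ++ E.reverse = E ++ Q) :
    ∃ S T, Pal S ∧ Pal T ∧ E = S ++ T := by
  have hEQ : Pal (E ++ Q) := by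
    show (E ++ Q).reverse = E ++ Q
    rw [List.reverse_append, hQ]; exact h
  exact corC hEQ hQ rfl

abbrev MCases (X Y : List α) : Prop :=
  (∃ S T U : List α, Pal S ∧ Pal T ∧ Pal U ∧ X = S ++ Y ++ T ++ U) ∨
  (∃ S T U Z : List α, Pal S ∧ Pal T ∧ Pal U ∧ X = Z ++ S ++ T ∧ Y = U ++ Z) ∨
  (∃ S T U Z : List α, Pal S ∧ Pal T ∧ Pal U ∧ X = S ++ Z ++ T ∧ Y = Z ++ U) ∨
  (∃ S T U Z : List α, Pal S ∧ Pal T ∧ Pal U ∧ X = Z ++ S ∧ Y = T ++ Z ++ U) ∨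
  (∃ S T U Z : List α, Pal S ∧ Pal T ∧ Pal U ∧ X = S ++ Z ∧ Y = Z ++ T ++ U) ∨
  (∃ S T U : List α, Pal S ∧ Pal T ∧ Pal U ∧ Y = S ++ X ++ T ++ U)

/-- Core lemma for the case where `P = Y ++ Q ++ X.reverse ++ Z` is itself a
palindrome. -/
theorem lemM : ∀ (n : ℕ) (Q X Y Z : List α),
    Y.length + Q.length + X.length + Z.length ≤ n → Pal Q → Pal Z →
    Pal (Y ++ Q ++ X.reverse ++ Z) → MCases X Y := by
  intro n
  induction n with
  | zero =>
    intro Q X Y Z hn hQ hZ hW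
    have hY : Y = [] := List.length_eq_zero_iff.mp (by omega)
    have hX : X = [] := List.length_eq_zero_iff.mp (by omega)
    exact Or.inl ⟨[], [], [], pal_nil, pal_nil, pal_nil, by simp [hY, hX]⟩
  | succ n ih =>
    intro Q X Y Z hn hQ hZ hW
    by_cases h0 : Y.length + Q.length + X.length = 0
    · have hY : Y = [] := List.length_eq_zero_iff.mp (by omega)
      have hX : X = [] := List.length_eq_zero_iff.mp (by omega)
      exact Or.inl ⟨[], [], [], pal_nil, pal_nil, pal_nil, by simp [hY, hX]⟩
    have hq : Q.reverse = Q := hQ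
    have hz : Z.reverse = Z := hZ
    have hw : (Y ++ Q ++ X.reverse ++ Z).reverse = Y ++ Q ++ X.reverse ++ Z := hW
    have E1 : Z ++ (X ++ (Q ++ Y.reverse)) = Y ++ (Q ++ (X.reverse ++ Z)) := by
      calc Z ++ (X ++ (Q ++ Y.reverse))
          = (Y ++ Q ++ X.reverse ++ Z).reverse := by
            simp [List.reverse_append, hq, hz]
        _ = Y ++ Q ++ X.reverse ++ Z := hw
        _ = Y ++ (Q ++ (X.reverse ++ Z)) := by simp
    rcases List.append_eq_append_iff.mp E1 with ⟨e, hYe, hE2⟩ | ⟨G, hZG, hE2⟩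
    · -- hYe : Y = Z ++ e, hE2 : X ++ (Q ++ Y.reverse) = e ++ (Q ++ (X.reverse ++ Z))
      rcases List.append_eq_append_iff.mp hE2 with ⟨G', heG, hE3⟩ | ⟨X₂, hXe, hE3⟩
      · -- heG : e = X ++ G', hE3 : Q ++ Y.reverse = G' ++ (Q ++ (X.reverse ++ Z)) : case 6
        have hYrev : Y.reverse = G'.reverse ++ (X.reverse ++ Z) := by
          rw [hYe, heG]; simp [List.reverse_append, hz]
        have key : Q ++ G'.reverse = G' ++ Q := by
          have h4 : (Q ++ G'.reverse) ++ (X.reverse ++ Z) = (G' ++ Q) ++ (X.reverse ++ Z) := by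
            simpa [hYrev, List.append_assoc] using hE3
          exact List.append_cancel_right h4
        obtain ⟨S, T, hS, hT, hG'⟩ := two_pal_of_comm hQ key
        exact Or.inr (Or.inr (Or.inr (Or.inr (Or.inr
          ⟨Z, S, T, hZ, hS, hT, by rw [hYe, heG, hG']; try simp⟩))))
      · -- hXe : X = e ++ X₂, hE3 : Q ++ (X.reverse ++ Z) = X₂ ++ (Q ++ Y.reverse) : case 2
        have hXrev : X.reverse = X₂.reverse ++ e.reverse := by rw [hXe]; try simp
        have hYrev : Y.reverse = e.reverse ++ Z := by rw [hYe]; try simp [hz]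
        have key : Q ++ X₂.reverse = X₂ ++ Q := by
          have h4 : (Q ++ X₂.reverse) ++ (e.reverse ++ Z) = (X₂ ++ Q) ++ (e.reverse ++ Z) := by
            simpa [hXrev, hYrev, List.append_assoc] using hE3
          exact List.append_cancel_right h4
        obtain ⟨S, T, hS, hT, hX₂⟩ := two_pal_of_comm hQ key
        exact Or.inr (Or.inl ⟨S, T, Z, e, hS, hT, hZ, by rw [hXe, hX₂]; try simp, hYe⟩)
    · -- hZG : Z = Y ++ G, hE2 : Q ++ (X.reverse ++ Z) = G ++ (X ++ (Q ++ Y.reverse))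
      have hZrev : Z = G.reverse ++ Y.reverse := by
        calc Z = Z.reverse := hz.symm
          _ = (Y ++ G).reverse := by rw [hZG]
          _ = G.reverse ++ Y.reverse := by simp
      have key0 : Q ++ (X.reverse ++ G.reverse) = G ++ (X ++ Q) := by
        have h4 : (Q ++ (X.reverse ++ G.reverse)) ++ Y.reverse
            = (G ++ (X ++ Q)) ++ Y.reverse := by
          have hE2' := hE2
          rw [hZrev] at hE2'
          simpa [List.append_assoc] using hE2'
        exact List.append_cancel_right h4
      have hGXQ : Pal (G ++ X ++ Q) := by
        show (G ++ X ++ Q).reverse = G ++ X ++ Q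
        calc (G ++ X ++ Q).reverse = Q ++ (X.reverse ++ G.reverse) := by
              simp [List.reverse_append, hq]
          _ = G ++ (X ++ Q) := key0
          _ = G ++ X ++ Q := by simp
      obtain ⟨S, T, hS, hT, hGX⟩ := corC hGXQ hQ (E := G ++ X) (by simp)
      -- hGX : G ++ X = S ++ T
      rcases List.append_eq_append_iff.mp hGX with ⟨X₁, hSX, hXT⟩ | ⟨G₂, hGS, hTX⟩
      · -- hSX : S = G ++ X₁, hXT : X = X₁ ++ T
        have hGX₁ : Pal (G ++ X₁) := hSX ▸ hS
        have hYG : Pal (Y ++ G) := hZG ▸ hZ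
        rcases pal_split' hGX₁ with ⟨K, hK, hX₁K⟩ | ⟨N, hN, hGN⟩
        · -- hX₁K : X₁ = K ++ G.reverse
          rcases pal_split hYG with ⟨Z₁, hZ₁, hYGr⟩ | ⟨M, hM, hGrev⟩
          · -- Y = G.reverse ++ Z₁ : case 3
            exact Or.inr (Or.inr (Or.inl ⟨K, T, Z₁, G.reverse, hK, hT, hZ₁,
              by rw [hXT, hX₁K]; try simp, hYGr⟩))
          · -- G.reverse = Y ++ M : case 1
            exact Or.inl ⟨K, M, T, hK, hM, hT, by rw [hXT, hX₁K, hGrev]; try simp⟩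
        · -- hGN : G = X₁.reverse ++ N
          have hGrevN : G.reverse = N ++ X₁ := by
            rw [hGN, List.reverse_append, List.reverse_reverse, hN]
          rcases pal_split hYG with ⟨Z₁, hZ₁, hYGr⟩ | ⟨M, hM, hGrev⟩
          · -- Y = G.reverse ++ Z₁ = N ++ X₁ ++ Z₁ : case 4
            exact Or.inr (Or.inr (Or.inr (Or.inl ⟨T, N, Z₁, X₁, hT, hN, hZ₁, hXT,
              by rw [hYGr, hGrevN]; try simp⟩)))
          · -- N ++ X₁ = Y ++ M : use lemL
            have hNX₁ : N ++ X₁ = Y ++ M := hGrevN.symm.trans hGrev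
            rcases lemL (N.length + M.length) N M X₁ Y le_rfl hN hM hNX₁ with
              ⟨S', T', hS', hT', hx⟩ | ⟨S', T', Z', hS', hT', hx, hy⟩ |
              ⟨S', T', Z', hS', hT', hx, hy⟩ | ⟨S', T', hS', hT', hy⟩
            · exact Or.inl ⟨S', T', T, hS', hT', hT, by rw [hXT, hx]; try simp⟩
            · exact Or.inr (Or.inl ⟨S', T, T', Z', hS', hT, hT',
                by rw [hXT, hx]; try simp, hy⟩)
            · exact Or.inr (Or.inr (Or.inl ⟨S', T, T', Z', hS', hT, hT',
                by rw [hXT, hx]; try simp, hy⟩))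
            · exact Or.inr (Or.inr (Or.inr (Or.inl ⟨T, S', T', X₁, hT, hS', hT', hXT, hy⟩)))
      · -- hGS : G = S ++ G₂, hTX : T = G₂ ++ X
        have hG₂X : Pal (G₂ ++ X) := hTX ▸ hT
        rcases pal_split' hG₂X with ⟨K, hK, hXK⟩ | ⟨G₃, hG₃, hG₂X'⟩
        · -- hXK : X = K ++ G₂.reverse
          have hs : S.reverse = S := hS
          have hZ' : Z = Y ++ (S ++ G₂) := by rw [hZG, hGS]
          have E4 : Y ++ (S ++ G₂) = G₂.reverse ++ (S ++ Y.reverse) := by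
            calc Y ++ (S ++ G₂) = Z := hZ'.symm
              _ = Z.reverse := hz.symm
              _ = (Y ++ (S ++ G₂)).reverse := by rw [hZ']
              _ = G₂.reverse ++ (S ++ Y.reverse) := by
                  simp [List.reverse_append, hs]
          rcases List.append_eq_append_iff.mp E4 with ⟨E, hG₂Y, hE5⟩ | ⟨E, hYG₂, hE5⟩
          · -- hG₂Y : G₂.reverse = Y ++ E, hE5 : S ++ G₂ = E ++ (S ++ Y.reverse) : case 1
            have hG₂' : G₂ = E.reverse ++ Y.reverse := by
              rw [← List.reverse_reverse G₂, hG₂Y, List.reverse_append]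
            have key : S ++ E.reverse = E ++ S := by
              have h4 : (S ++ E.reverse) ++ Y.reverse = (E ++ S) ++ Y.reverse := by
                have hE5' := hE5
                rw [hG₂'] at hE5'
                simpa [List.append_assoc] using hE5'
              exact List.append_cancel_right h4
            obtain ⟨S₁, T₁, hS₁, hT₁, hE⟩ := two_pal_of_comm hS key
            exact Or.inl ⟨K, S₁, T₁, hK, hS₁, hT₁, by rw [hXK, hG₂Y, hE]; try simp⟩
          · -- hYG₂ : Y = G₂.reverse ++ E, hE5 : S ++ Y.reverse = E ++ (S ++ G₂) : case 5
            have hYrev : Y.reverse = E.reverse ++ G₂ := by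
              rw [hYG₂]; simp
            have key : S ++ E.reverse = E ++ S := by
              have h4 : (S ++ E.reverse) ++ G₂ = (E ++ S) ++ G₂ := by
                have hE5' := hE5
                rw [hYrev] at hE5'
                simpa [List.append_assoc] using hE5'
              exact List.append_cancel_right h4
            obtain ⟨S₁, T₁, hS₁, hT₁, hE⟩ := two_pal_of_comm hS key
            exact Or.inr (Or.inr (Or.inr (Or.inr (Or.inl
              ⟨K, S₁, T₁, G₂.reverse, hK, hS₁, hT₁, hXK, by rw [hYG₂, hE]; try simp⟩))))
        · -- hG₂X' : G₂ = X.reverse ++ G₃ : recursion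
          have hzeq : Y ++ S ++ X.reverse ++ G₃ = Z := by
            rw [hZG, hGS, hG₂X']; simp
          have hpal : Pal (Y ++ S ++ X.reverse ++ G₃) := by rw [hzeq]; exact hZ
          have hlen : Y.length + S.length + X.length + G₃.length ≤ n := by
            have l1 := congrArg List.length hzeq
            simp only [List.length_append, List.length_reverse] at l1
            omega
          exact ih S X Y G₃ hlen hS hG₃ hpal

end Aux

theorem stmt12 {α : Type*} (P Q R X Y : List α) (hP : Pal P) (hQ : Pal Q) (hR : Pal R)
    (h : P ++ X = Y ++ Q ++ R) :
    (∃ S T U : List α, Pal S ∧ Pal T ∧ Pal U ∧ X = S ++ Y ++ T ++ U) ∨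
    (∃ S T U Z : List α, Pal S ∧ Pal T ∧ Pal U ∧ X = Z ++ S ++ T ∧ Y = U ++ Z) ∨
    (∃ S T U Z : List α, Pal S ∧ Pal T ∧ Pal U ∧ X = S ++ Z ++ T ∧ Y = Z ++ U) ∨
    (∃ S T U Z : List α, Pal S ∧ Pal T ∧ Pal U ∧ X = Z ++ S ∧ Y = T ++ Z ++ U) ∨
    (∃ S T U Z : List α, Pal S ∧ Pal T ∧ Pal U ∧ X = S ++ Z ∧ Y = Z ++ T ++ U) ∨
    (∃ S T U : List α, Pal S ∧ Pal T ∧ Pal U ∧ Y = S ++ X ++ T ++ U) := by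
  have h' : P ++ X = (Y ++ Q) ++ R := by simpa [List.append_assoc] using h
  rcases List.append_eq_append_iff.mp h' with ⟨e, hYQ, hXe⟩ | ⟨R₁, hP1, hR1⟩
  · -- hYQ : Y ++ Q = P ++ e, hXe : X = e ++ R
    rcases lemL (P.length + Q.length) P Q e Y le_rfl hP hQ hYQ.symm with
      ⟨S, T, hS, hT, hx⟩ | ⟨S, T, Z, hS, hT, hx, hy⟩ |
      ⟨S, T, Z, hS, hT, hx, hy⟩ | ⟨S, T, hS, hT, hy⟩
    · exact Or.inl ⟨S, T, R, hS, hT, hR, by rw [hXe, hx]; try simp⟩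
    · exact Or.inr (Or.inl ⟨S, R, T, Z, hS, hR, hT, by rw [hXe, hx]; try simp, hy⟩)
    · exact Or.inr (Or.inr (Or.inl ⟨S, R, T, Z, hS, hR, hT, by rw [hXe, hx]; try simp, hy⟩))
    · exact Or.inr (Or.inr (Or.inr (Or.inl ⟨R, S, T, e, hR, hS, hT, hXe, hy⟩)))
  · -- hP1 : P = (Y ++ Q) ++ R₁, hR1 : R = R₁ ++ X
    have hR₁X : Pal (R₁ ++ X) := hR1 ▸ hR
    rcases pal_split' hR₁X with ⟨D, hD, hXD⟩ | ⟨Z₀, hZ₀, hR₁⟩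
    · -- hXD : X = D ++ R₁.reverse
      have hp : P.reverse = P := hP
      have hq : Q.reverse = Q := hQ
      have E2 : R₁.reverse ++ (Q ++ Y.reverse) = Y ++ (Q ++ R₁) := by
        calc R₁.reverse ++ (Q ++ Y.reverse) = ((Y ++ Q) ++ R₁).reverse := by
              simp [List.reverse_append, hq]
          _ = P.reverse := by rw [hP1]
          _ = P := hp
          _ = Y ++ (Q ++ R₁) := by rw [hP1]; try simp
      rcases List.append_eq_append_iff.mp E2 with ⟨E, hYE, hE5⟩ | ⟨F, hR₁F, hE5⟩
      · -- hYE : Y = R₁.reverse ++ E, hE5 : Q ++ Y.reverse = E ++ (Q ++ R₁) : case 5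
        have hYrev : Y.reverse = E.reverse ++ R₁ := by rw [hYE]; try simp
        have key : Q ++ E.reverse = E ++ Q := by
          have h4 : (Q ++ E.reverse) ++ R₁ = (E ++ Q) ++ R₁ := by
            have hE5' := hE5
            rw [hYrev] at hE5'
            simpa [List.append_assoc] using hE5'
          exact List.append_cancel_right h4
        obtain ⟨S, T, hS, hT, hE⟩ := two_pal_of_comm hQ key
        exact Or.inr (Or.inr (Or.inr (Or.inr (Or.inl
          ⟨D, S, T, R₁.reverse, hD, hS, hT, hXD, by rw [hYE, hE]; try simp⟩))))
      · -- hR₁F : R₁.reverse = Y ++ F, hE5 : Q ++ R₁ = F ++ (Q ++ Y.reverse) : case 1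
        have hR₁' : R₁ = F.reverse ++ Y.reverse := by
          rw [← List.reverse_reverse R₁, hR₁F, List.reverse_append]
        have key : Q ++ F.reverse = F ++ Q := by
          have h4 : (Q ++ F.reverse) ++ Y.reverse = (F ++ Q) ++ Y.reverse := by
            have hE5' := hE5
            rw [hR₁'] at hE5'
            simpa [List.append_assoc] using hE5'
          exact List.append_cancel_right h4
        obtain ⟨S, T, hS, hT, hF⟩ := two_pal_of_comm hQ key
        exact Or.inl ⟨D, S, T, hD, hS, hT, by rw [hXD, hR₁F, hF]; try simp⟩
    · -- hR₁ : R₁ = X.reverse ++ Z₀ : lemM applies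
      have hpeq : Y ++ Q ++ X.reverse ++ Z₀ = P := by rw [hP1, hR₁]; try simp
      have hpal : Pal (Y ++ Q ++ X.reverse ++ Z₀) := by rw [hpeq]; exact hP
      exact lemM (Y.length + Q.length + X.length + Z₀.length) Q X Y Z₀ le_rfl hQ hZ₀ hpal
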